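/- For every 0 ≤ k ≤ n−1 and every φ ∈ C^k(X,ℝ), ‖dφ‖² = ‖d*φ‖² + ‖φ‖² + Σ_{τ ∈ X(k−1)} ⟨ (M')⁺_{τ,0} (I − M⁻_{τ,0}) φ_τ , φ_τ ⟩. -/

import Mathlib

/-!
Framework: a pure `n`-dimensional finite weighted simplicial complex, following
Kaufman–Oppenheim, "High Order Random Walks: Beyond Spectral Gap".

A complex is given by its finset of faces (finsets of a vertex type `V`) together with
a weight function `m`.  We index levels by **cardinality**: `X.K c` is the set of faces
with `c` elements, i.e. the set `X(k)` of `k`-dimensional faces for `k = c - 1`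
(so `X(-1) = X.K 0`, and a pure `n`-dimensional complex has top level `X.K (n+1)`).
-/

noncomputable section

open Finset

/-- The data of a weighted simplicial complex: a finite family of faces and a weight. -/
structure WSC (V : Type*) [DecidableEq V] where
  faces : Finset (Finset V)
  m : Finset V → ℝ

namespace WSC

variable {V : Type*} [DecidableEq V]

/-- `X.IsWSC n` : `X` is a pure `n`-dimensional finite weighted simplicial complex:
the faces form a nonempty downward-closed family, every face is contained in a face with
`n+1` elements (and no face has more), the weights are positive, and the weight of every
face of cardinality `≤ n` is the sum of the weights of the faces covering it. -/
def IsWSC (X : WSC V) (n : ℕ) : Prop :=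
  ∅ ∈ X.faces ∧
  (∀ ⦃σ τ : Finset V⦄, σ ∈ X.faces → τ ⊆ σ → τ ∈ X.faces) ∧
  (∀ ⦃σ⦄, σ ∈ X.faces → σ.card ≤ n + 1) ∧
  (∀ ⦃σ⦄, σ ∈ X.faces → ∃ η ∈ X.faces, σ ⊆ η ∧ η.card = n + 1) ∧
  (∀ ⦃σ⦄, σ ∈ X.faces → 0 < X.m σ) ∧
  (∀ ⦃τ⦄, τ ∈ X.faces → τ.card ≤ n →
    X.m τ = ∑ σ ∈ X.faces.filter (fun σ => τ ⊆ σ ∧ σ.card = τ.card + 1), X.m σ)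

/-- `X.K c` : the faces with `c` elements, i.e. `X(c-1)` in dimension indexing. -/
def K (X : WSC V) (c : ℕ) : Finset (Finset V) := X.faces.filter (fun σ => σ.card = c)

/-- The weighted inner product on cochains supported on the faces with `c` elements. -/
def inn (X : WSC V) (c : ℕ) (φ ψ : Finset V → ℝ) : ℝ :=
  ∑ σ ∈ X.K c, X.m σ * (φ σ * ψ σ)

/-- The squared norm of a cochain on the faces with `c` elements. -/
def normSq (X : WSC V) (c : ℕ) (φ : Finset V → ℝ) : ℝ := X.inn c φ φ

/-- The norm of a cochain on the faces with `c` elements. -/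
def norm (X : WSC V) (c : ℕ) (φ : Finset V → ℝ) : ℝ := Real.sqrt (X.normSq c φ)

/-- `X.cochainZero c φ` : φ belongs to `C^{c-1}_0 (X, ℝ)`, i.e. it is orthogonal to the
constant functions at level `c`. -/
def cochainZero (X : WSC V) (c : ℕ) (φ : Finset V → ℝ) : Prop :=
  ∑ σ ∈ X.K c, X.m σ * φ σ = 0

/-- The signless differential, from cochains at level `c` to cochains at level `c+1`:
`(d φ)(σ) = ∑_{τ ∈ X(c-1), τ ⊂ σ} φ(τ)`. -/
def d (X : WSC V) (c : ℕ) (φ : Finset V → ℝ) : Finset V → ℝ :=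
  fun σ => ∑ τ ∈ (X.K c).filter (fun τ => τ ⊆ σ), φ τ

/-- The (explicit formula for the) adjoint of the signless differential, from cochains at
level `c+1` to cochains at level `c`: `(d* ψ)(τ) = ∑_{σ ⊇ τ} (m σ / m τ) ψ(σ)`. -/
def dStar (X : WSC V) (c : ℕ) (ψ : Finset V → ℝ) : Finset V → ℝ :=
  fun τ => ∑ σ ∈ (X.K (c + 1)).filter (fun σ => τ ⊆ σ), (X.m σ / X.m τ) * ψ σ

/-- The (lazy) upper random walk operator `M⁺` on cochains at level `c`
(i.e. on `k`-cochains for `k = c-1`; note `k + 2 = c + 1`). -/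
def Mup (X : WSC V) (c : ℕ) (φ : Finset V → ℝ) : Finset V → ℝ :=
  fun τ => (1 / ((c : ℝ) + 1)) * φ τ +
    ∑ τ' ∈ (X.K c).filter (fun τ' => τ ∪ τ' ∈ X.K (c + 1)),
      (X.m (τ ∪ τ') / (((c : ℝ) + 1) * X.m τ)) * φ τ'

/-- The lower random walk operator `M⁻` on cochains at level `c`
(i.e. on `k`-cochains for `k = c-1`; note `k + 1 = c`). -/
def Mdown (X : WSC V) (c : ℕ) (φ : Finset V → ℝ) : Finset V → ℝ :=
  fun τ => (∑ η ∈ (X.K (c - 1)).filter (fun η => η ⊆ τ), X.m τ / ((c : ℝ) * X.m η)) * φ τ +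
    ∑ τ' ∈ (X.K c).filter (fun τ' => τ' ≠ τ ∧ τ ∩ τ' ∈ X.K (c - 1)),
      (X.m τ' / ((c : ℝ) * X.m (τ ∩ τ'))) * φ τ'

/-- The non-lazy upper random walk operator `(M')⁺ = ((k+2)/(k+1)) M⁺ - (1/(k+1)) I`
on cochains at level `c = k+1`. -/
def Mup' (X : WSC V) (c : ℕ) (φ : Finset V → ℝ) : Finset V → ℝ :=
  fun τ => (((c : ℝ) + 1) / (c : ℝ)) * X.Mup c φ τ - (1 / (c : ℝ)) * φ τ

/-- The link `X_τ` of a face `τ`, with the induced weight `m_τ (η) = m (τ ∪ η)`. -/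
def link (X : WSC V) (τ : Finset V) : WSC V where
  faces := X.faces.filter (fun η => η ∩ τ = ∅ ∧ τ ∪ η ∈ X.faces)
  m := fun η => X.m (τ ∪ η)

/-- The localization `φ_τ (η) = φ (τ ∪ η)` of a cochain `φ` to the link of `τ`. -/
def localize (φ : Finset V → ℝ) (τ : Finset V) : Finset V → ℝ := fun η => φ (τ ∪ η)

/-- The underlying graph (1-skeleton) of a complex. -/
def skeleton (Y : WSC V) : SimpleGraph {v : V // ({v} : Finset V) ∈ Y.faces} where
  Adj u w := u ≠ w ∧ ({(u : V), (w : V)} : Finset V) ∈ Y.faces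
  symm := by
    constructor
    intro u w h
    refine ⟨h.1.symm, ?_⟩
    rw [Finset.pair_comm]
    exact h.2
  loopless := by constructor; intro u h; exact h.1 rfl

/-- All links of `X` of dimension `≥ 1` (including `X` itself, as the link of `∅`)
have a connected underlying graph. -/
def LinksConnected (X : WSC V) (n : ℕ) : Prop :=
  ∀ c < n, ∀ τ ∈ X.K c, (X.link τ).skeleton.Connected

/-- The second largest eigenvalue of the self-adjoint operator `(M')⁺₀` on `C⁰(Y, ℝ)`,
via its Rayleigh-quotient characterization over the orthogonal complement of the
constant functions (the top eigenfunction). -/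
def secondEig (Y : WSC V) : ℝ :=
  sSup {r : ℝ | ∃ ψ : Finset V → ℝ, Y.normSq 1 ψ ≠ 0 ∧
    (∑ v ∈ Y.K 1, Y.m v * ψ v) = 0 ∧ r = Y.inn 1 (Y.Mup' 1 ψ) ψ / Y.normSq 1 ψ}

/-- The smallest eigenvalue of the self-adjoint operator `(M')⁺₀` on `C⁰(Y, ℝ)`,
via its Rayleigh-quotient characterization. -/
def smallestEig (Y : WSC V) : ℝ :=
  sInf {r : ℝ | ∃ ψ : Finset V → ℝ, Y.normSq 1 ψ ≠ 0 ∧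
    r = Y.inn 1 (Y.Mup' 1 ψ) ψ / Y.normSq 1 ψ}

/-- `μ_k = max_{τ ∈ X(k-1)} μ_τ` where `μ_τ` is the second largest eigenvalue of
`(M')⁺_{τ,0}`; faces `τ ∈ X(k-1)` have `k` elements. -/
def mu (X : WSC V) (k : ℕ) : ℝ :=
  sSup {r : ℝ | ∃ τ ∈ X.K k, r = (X.link τ).secondEig}

/-- `ν_k = min_{τ ∈ X(k-1)} ν_τ` where `ν_τ` is the smallest eigenvalue of
`(M')⁺_{τ,0}`; faces `τ ∈ X(k-1)` have `k` elements. -/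
def nu (X : WSC V) (k : ℕ) : ℝ :=
  sInf {r : ℝ | ∃ τ ∈ X.K k, r = (X.link τ).smallestEig}

/-- `X` is a one-sided `λ`-local spectral expander: `μ_k ≤ λ` for every `0 ≤ k ≤ n-1`. -/
def OneSided (X : WSC V) (n : ℕ) (lam : ℝ) : Prop := ∀ k < n, X.mu k ≤ lam

/-- `X` is a two-sided `λ`-local spectral expander: `μ_k ≤ λ` and `ν_k ≥ -λ`
for every `0 ≤ k ≤ n-1`. -/
def TwoSided (X : WSC V) (n : ℕ) (lam : ℝ) : Prop :=
  ∀ k < n, X.mu k ≤ lam ∧ -lam ≤ X.nu k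

end WSC

open WSC

/-!
Expanding `‖dφ‖²` face by face, the diagonal terms give `‖φ‖²` because every weight is the sum
of the weights of the faces one dimension up, and the off-diagonal terms give the upper adjacency
form `∑ m(a ∪ b) φ(a) φ(b)` over pairs of `k`-faces spanning a `(k+1)`-face. Such a pair has the
single common `(k-1)`-face `τ = a ∩ b`, so this form is the sum over `τ` of the vertex-level
adjacency forms of the links `X_τ`. In a link, `M⁻_{τ,0}` replaces `φ_τ` by its weighted mean,
which is `d*φ(τ)`, and `(M')⁺_{τ,0}` averages over neighbours; hence the local term is the link's
adjacency form minus `m(τ) (d*φ(τ))²`, and these corrections add up to `‖d*φ‖²`.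
-/

namespace WSC

variable {V : Type*} [DecidableEq V] {X : WSC V} {n c k : ℕ} {a b v τ η σ : Finset V}

@[simp]
lemma mem_K : σ ∈ X.K c ↔ σ ∈ X.faces ∧ σ.card = c := mem_filter

@[simp]
lemma link_m : (X.link τ).m η = X.m (τ ∪ η) := rfl

@[simp]
lemma localize_apply (φ : Finset V → ℝ) : localize φ τ η = φ (τ ∪ η) := rfl

lemma K_zero (h : ∅ ∈ X.faces) : X.K 0 = {∅} := by
  ext σ
  simp only [mem_K, card_eq_zero, mem_singleton, and_iff_right_iff_imp]
  rintro rfl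
  exact h

namespace IsWSC

lemma mem_faces_of_subset (hX : X.IsWSC n) (hσ : σ ∈ X.faces) (hτσ : τ ⊆ σ) :
    τ ∈ X.faces :=
  hX.2.1 hσ hτσ

lemma m_pos (hX : X.IsWSC n) (hσ : σ ∈ X.faces) : 0 < X.m σ :=
  hX.2.2.2.2.1 hσ

lemma m_eq_sum_K (hX : X.IsWSC n) (hτ : τ ∈ X.K c) (hc : c ≤ n) :
    X.m τ = ∑ σ ∈ (X.K (c + 1)).filter (τ ⊆ ·), X.m σ := by
  rw [mem_K] at hτ
  rw [hX.2.2.2.2.2 hτ.1 (hτ.2 ▸ hc), K, filter_filter, hτ.2]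
  simp only [and_comm]

lemma mem_link_faces_iff (hX : X.IsWSC n) :
    η ∈ (X.link τ).faces ↔ Disjoint η τ ∧ τ ∪ η ∈ X.faces := by
  simp only [link, mem_filter, disjoint_iff_inter_eq_empty]
  exact ⟨fun h => h.2, fun h => ⟨hX.mem_faces_of_subset h.2 subset_union_right, h⟩⟩

lemma mem_link_K_iff (hX : X.IsWSC n) :
    η ∈ (X.link τ).K c ↔ Disjoint η τ ∧ τ ∪ η ∈ X.K (τ.card + c) := by
  simp only [mem_K, hX.mem_link_faces_iff]
  constructor
  · rintro ⟨⟨hd, hf⟩, rfl⟩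
    exact ⟨hd, hf, card_union_of_disjoint hd.symm⟩
  · rintro ⟨hd, hf, hc⟩
    rw [card_union_of_disjoint hd.symm] at hc
    exact ⟨⟨hd, hf⟩, by omega⟩

lemma sdiff_mem_link_faces (hX : X.IsWSC n) (hσ : σ ∈ X.faces) (hτσ : τ ⊆ σ) :
    σ \ τ ∈ (X.link τ).faces := by
  rw [hX.mem_link_faces_iff, union_sdiff_of_subset hτσ]
  exact ⟨sdiff_disjoint, hσ⟩

lemma sum_link_K {M : Type*} [AddCommMonoid M] (hX : X.IsWSC n) (hτ : τ.card = k) (c : ℕ)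
    (f : Finset V → M) :
    ∑ η ∈ (X.link τ).K c, f (τ ∪ η) = ∑ σ ∈ (X.K (k + c)).filter (τ ⊆ ·), f σ := by
  subst hτ
  refine sum_nbij' (τ ∪ ·) (· \ τ) (fun η hη => ?_) (fun σ hσ => ?_) (fun η hη => ?_)
    (fun σ hσ => ?_) (fun _ _ => rfl)
  · rw [hX.mem_link_K_iff] at hη
    exact mem_filter.2 ⟨hη.2, subset_union_left⟩
  · rw [mem_filter] at hσ
    rw [hX.mem_link_K_iff, union_sdiff_of_subset hσ.2]
    exact ⟨sdiff_disjoint, hσ.1⟩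
  · exact union_sdiff_cancel_left ((hX.mem_link_K_iff.1 hη).1.symm)
  · exact union_sdiff_of_subset (mem_filter.1 hσ).2

lemma empty_mem_link_faces (hX : X.IsWSC n) (hτ : τ ∈ X.faces) : ∅ ∈ (X.link τ).faces := by
  rw [hX.mem_link_faces_iff, union_empty]
  exact ⟨disjoint_empty_left τ, hτ⟩

lemma m_union_eq_sum_link (hX : X.IsWSC n) (hη : η ∈ (X.link τ).faces)
    (hn : (τ ∪ η).card ≤ n) :
    X.m (τ ∪ η) = ∑ η' ∈ (X.link τ).faces.filter (fun η' => η ⊆ η' ∧ η'.card = η.card + 1),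
      X.m (τ ∪ η') := by
  rw [hX.mem_link_faces_iff] at hη
  have hcard : (τ ∪ η).card = τ.card + η.card := card_union_of_disjoint hη.1.symm
  rw [hX.2.2.2.2.2 hη.2 hn]
  symm
  refine sum_nbij' (τ ∪ ·) (· \ τ) (fun η' hη' => ?_) (fun σ hσ => ?_) (fun η' hη' => ?_)
    (fun σ hσ => ?_) (fun _ _ => rfl)
  · simp only [mem_filter, hX.mem_link_faces_iff] at hη' ⊢
    obtain ⟨⟨hd, hf⟩, hsub, hc⟩ := hη'
    exact ⟨hf, union_subset_union_right hsub, by rw [card_union_of_disjoint hd.symm]; omega⟩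
  · simp only [mem_filter] at hσ ⊢
    obtain ⟨hf, hsub, hc⟩ := hσ
    have hτσ : τ ⊆ σ := subset_union_left.trans hsub
    refine ⟨hX.sdiff_mem_link_faces hf hτσ,
      subset_sdiff.2 ⟨subset_union_right.trans hsub, hη.1⟩, ?_⟩
    rw [card_sdiff_of_subset hτσ]
    omega
  · exact union_sdiff_cancel_left ((hX.mem_link_faces_iff.1 (mem_filter.1 hη').1).1.symm)
  · exact union_sdiff_of_subset (subset_union_left.trans (mem_filter.1 hσ).2.1)

lemma link (hX : X.IsWSC n) (hτ : τ ∈ X.K k) (hk : k ≤ n) : (X.link τ).IsWSC (n - k) := by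
  obtain ⟨hτf, rfl⟩ := mem_K.1 hτ
  have ⟨_, _, hcard_le, hpure, _, _⟩ := hX
  refine ⟨hX.empty_mem_link_faces hτf, fun η η' hη hη' => ?_, fun η hη => ?_, fun η hη => ?_,
    fun η hη => hX.m_pos (hX.mem_link_faces_iff.1 hη).2, fun η hη hn => ?_⟩
  · rw [hX.mem_link_faces_iff] at hη ⊢
    exact ⟨hη.1.mono_left hη', hX.mem_faces_of_subset hη.2 (union_subset_union_right hη')⟩
  · rw [hX.mem_link_faces_iff] at hη
    have := hcard_le hη.2
    rw [card_union_of_disjoint hη.1.symm] at this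
    omega
  · rw [hX.mem_link_faces_iff] at hη
    obtain ⟨ζ, hζ, hsub, hcard⟩ := hpure hη.2
    have hτζ : τ ⊆ ζ := subset_union_left.trans hsub
    refine ⟨ζ \ τ, hX.sdiff_mem_link_faces hζ hτζ,
      subset_sdiff.2 ⟨subset_union_right.trans hsub, hη.1⟩, ?_⟩
    rw [card_sdiff_of_subset hτζ]
    omega
  · refine hX.m_union_eq_sum_link hη ?_
    rw [card_union_of_disjoint (hX.mem_link_faces_iff.1 hη).1.symm]
    omega

end IsWSC

def adjacencyForm (X : WSC V) (c : ℕ) (φ : Finset V → ℝ) : ℝ :=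
  ∑ a ∈ X.K c, ∑ b ∈ (X.K c).filter (fun b => a ∪ b ∈ X.K (c + 1)), X.m (a ∪ b) * (φ a * φ b)

lemma card_lt_card_union_of_ne (ha : a.card = c) (hb : b.card = c) (hab : a ≠ b) :
    c < (a ∪ b).card := by
  by_contra! h
  have hau : a = a ∪ b := eq_of_subset_of_card_le subset_union_left (by omega)
  have hbu : b = a ∪ b := eq_of_subset_of_card_le subset_union_right (by omega)
  exact hab (hau.trans hbu.symm)

lemma IsWSC.sum_m_filter_union_subset (hX : X.IsWSC n) (hc : c ≤ n) (ha : a ∈ X.K c)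
    (hb : b ∈ X.K c) :
    ∑ σ ∈ (X.K (c + 1)).filter (a ∪ b ⊆ ·), X.m σ =
      (if a = b then X.m a else 0) + (if a ∪ b ∈ X.K (c + 1) then X.m (a ∪ b) else 0) := by
  by_cases hab : a = b
  · subst hab
    have : a ∉ X.K (c + 1) := fun h => by simp_all
    simp only [union_self, if_true, this, if_false, add_zero]
    exact (hX.m_eq_sum_K ha hc).symm
  · rw [if_neg hab, zero_add, ← sum_ite_eq', sum_filter]
    refine sum_congr rfl fun σ hσ => if_congr ?_ rfl rfl
    refine ⟨fun h => (eq_of_subset_of_card_le h ?_).symm, fun h => h ▸ subset_rfl⟩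
    have := card_lt_card_union_of_ne (mem_K.1 ha).2 (mem_K.1 hb).2 hab
    rw [(mem_K.1 hσ).2]
    omega

lemma IsWSC.normSq_d (hX : X.IsWSC n) (hc : c ≤ n) (φ : Finset V → ℝ) :
    X.normSq (c + 1) (X.d c φ) = X.normSq c φ + X.adjacencyForm c φ := by
  calc X.normSq (c + 1) (X.d c φ)
      = ∑ a ∈ X.K c, ∑ b ∈ X.K c,
          (∑ σ ∈ (X.K (c + 1)).filter (a ∪ b ⊆ ·), X.m σ) * (φ a * φ b) := by
        simp only [normSq, inn, d, sum_filter, mul_sum, sum_mul]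
        rw [sum_comm]
        refine sum_congr rfl fun a _ => ?_
        rw [sum_comm]
        refine sum_congr rfl fun b _ => sum_congr rfl fun σ _ => ?_
        by_cases ha : a ⊆ σ <;> by_cases hb : b ⊆ σ <;> simp [ha, hb, union_subset_iff, mul_comm]
    _ = ∑ a ∈ X.K c, ∑ b ∈ X.K c,
          ((if a = b then X.m a else 0) + (if a ∪ b ∈ X.K (c + 1) then X.m (a ∪ b) else 0)) *
            (φ a * φ b) :=
        sum_congr rfl fun a ha => sum_congr rfl fun b hb => by
          rw [hX.sum_m_filter_union_subset hc ha hb]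
    _ = X.normSq c φ + X.adjacencyForm c φ := by
        simp only [add_mul, sum_add_distrib, ite_mul, zero_mul, sum_ite_eq, adjacencyForm,
          sum_filter, normSq, inn]
        refine congrArg₂ (· + ·) (sum_congr rfl fun a ha => by simp [ha]) rfl

lemma Mup'_one_apply (X : WSC V) (f : Finset V → ℝ) (v : Finset V) :
    X.Mup' 1 f v =
      ∑ w ∈ (X.K 1).filter (fun w => v ∪ w ∈ X.K (1 + 1)), X.m (v ∪ w) / X.m v * f w := by
  simp only [Mup', Mup, Nat.cast_one, mul_add, mul_sum]
  ring_nf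
  exact sum_congr rfl fun _ _ => by ring

lemma Mdown_one_apply (h : ∅ ∈ X.faces) (ψ : Finset V → ℝ) (hv : v ∈ X.K 1) :
    X.Mdown 1 ψ v = X.dStar 0 ψ ∅ := by
  have hdisj : ∀ w ∈ (X.K 1).erase v, v ∩ w = ∅ := fun w hw => by
    obtain ⟨x, rfl⟩ := card_eq_one.1 (mem_K.1 hv).2
    obtain ⟨y, rfl⟩ := card_eq_one.1 (mem_K.1 (mem_erase.1 hw).2).2
    rw [← disjoint_iff_inter_eq_empty, disjoint_singleton]
    exact fun hxy => (mem_erase.1 hw).1 (by rw [hxy])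
  have hne : ((X.K 1).filter fun w => w ≠ v ∧ v ∩ w ∈ X.K (1 - 1)) = (X.K 1).erase v := by
    ext w
    simp only [mem_filter, mem_erase, Nat.sub_self, K_zero h, mem_singleton]
    exact ⟨fun hw => ⟨hw.2.1, hw.1⟩, fun hw => ⟨hw.2, hw.1, hdisj w (mem_erase.2 hw)⟩⟩
  have hsub : ((X.K (1 - 1)).filter fun η => η ⊆ v) = {∅} := by
    rw [Nat.sub_self, K_zero h, filter_singleton, if_pos (empty_subset v)]
  simp only [Mdown, dStar, hne, hsub, zero_add, sum_singleton, Nat.cast_one, one_mul,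
    filter_true_of_mem fun w _ => empty_subset w]
  rw [← add_sum_erase _ _ hv]
  exact congrArg₂ (· + ·) rfl (sum_congr rfl fun w hw => by rw [hdisj w hw])

lemma IsWSC.filter_union_mem_K_two_eq_link_K_one (hX : X.IsWSC n) (hv : v ∈ X.K 1) :
    (X.K 1).filter (fun w => v ∪ w ∈ X.K (1 + 1)) = (X.link v).K 1 := by
  have hv1 := (mem_K.1 hv).2
  ext w
  rw [mem_filter, hX.mem_link_K_iff, hv1]
  refine ⟨fun ⟨hw, hu⟩ => ⟨?_, hu⟩, fun ⟨hd, hu⟩ => ⟨mem_K.2 ⟨?_, ?_⟩, hu⟩⟩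
  · have := card_union_add_card_inter v w
    rw [(mem_K.1 hu).2, (mem_K.1 hw).2, hv1] at this
    exact (disjoint_iff_inter_eq_empty.2 (card_eq_zero.1 (by omega))).symm
  · exact hX.mem_faces_of_subset (mem_K.1 hu).1 subset_union_right
  · have := card_union_of_disjoint hd.symm
    rw [(mem_K.1 hu).2, hv1] at this
    omega

lemma IsWSC.sum_m_union_neighbors (hX : X.IsWSC n) (hn : 1 ≤ n) (hv : v ∈ X.K 1) :
    ∑ w ∈ (X.K 1).filter (fun w => v ∪ w ∈ X.K (1 + 1)), X.m (v ∪ w) = X.m v := by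
  rw [hX.filter_union_mem_K_two_eq_link_K_one hv, hX.sum_link_K (mem_K.1 hv).2 1 X.m,
    ← hX.m_eq_sum_K hv hn]

lemma IsWSC.inn_Mup'_sub_Mdown (hX : X.IsWSC n) (hn : 1 ≤ n) (ψ : Finset V → ℝ) :
    X.inn 1 (X.Mup' 1 (fun v => ψ v - X.Mdown 1 ψ v)) ψ =
      X.adjacencyForm 1 ψ - X.normSq 0 (X.dStar 0 ψ) := by
  have hm0 : X.m ∅ ≠ 0 := (hX.m_pos hX.1).ne'
  have hmean : ∑ v ∈ X.K 1, X.m v * ψ v = X.m ∅ * X.dStar 0 ψ ∅ := by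
    simp only [dStar, filter_true_of_mem fun w _ => empty_subset w, mul_sum]
    exact sum_congr rfl fun v _ => by field_simp
  have hrow : ∀ v ∈ X.K 1, X.m v * (X.Mup' 1 (fun v => ψ v - X.Mdown 1 ψ v) v * ψ v) =
      ∑ w ∈ (X.K 1).filter (fun w => v ∪ w ∈ X.K (1 + 1)), X.m (v ∪ w) * (ψ v * ψ w) -
        X.dStar 0 ψ ∅ * (X.m v * ψ v) := fun v hv => by
    have hmv : X.m v ≠ 0 := (hX.m_pos (mem_K.1 hv).1).ne'
    conv_rhs => rw [← hX.sum_m_union_neighbors hn hv]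
    rw [Mup'_one_apply, sum_mul, mul_sum, sum_mul, mul_sum, ← sum_sub_distrib]
    refine sum_congr rfl fun w hw => ?_
    rw [Mdown_one_apply hX.1 ψ (mem_filter.1 hw).1]
    field_simp
  rw [inn, sum_congr rfl hrow, sum_sub_distrib, ← mul_sum, hmean, normSq, inn, K_zero hX.1,
    sum_singleton, adjacencyForm]
  ring

lemma IsWSC.link_adjacencyForm_one (hX : X.IsWSC n) (hτ : τ.card = k) (φ : Finset V → ℝ) :
    (X.link τ).adjacencyForm 1 (localize φ τ) =
      ∑ a ∈ (X.K (k + 1)).filter (τ ⊆ ·), ∑ b ∈ (X.K (k + 1)).filter (τ ⊆ ·),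
        if a ∪ b ∈ X.K (k + 1 + 1) then X.m (a ∪ b) * (φ a * φ b) else 0 := by
  have hunion : ∀ η η' : Finset V, τ ∪ (η ∪ η') = (τ ∪ η) ∪ (τ ∪ η') := fun η η' => by
    rw [union_union_union_comm, union_self]
  rw [← hX.sum_link_K hτ 1]
  refine sum_congr rfl fun η hη => ?_
  rw [← hX.sum_link_K hτ 1, sum_filter]
  refine sum_congr rfl fun η' hη' => ?_
  have hmem : η ∪ η' ∈ (X.link τ).K (1 + 1) ↔ (τ ∪ η) ∪ (τ ∪ η') ∈ X.K (k + 1 + 1) := by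
    rw [hX.mem_link_K_iff, disjoint_union_left, hunion, hτ]
    exact and_iff_right ⟨(hX.mem_link_K_iff.1 hη).1, (hX.mem_link_K_iff.1 hη').1⟩
  simp only [hmem, link_m, localize_apply, hunion]

lemma IsWSC.sum_link_adjacencyForm_one (hX : X.IsWSC n) (φ : Finset V → ℝ) :
    ∑ τ ∈ X.K k, (X.link τ).adjacencyForm 1 (localize φ τ) = X.adjacencyForm (k + 1) φ := by
  set F : Finset V → Finset V → ℝ := fun a b =>
    if a ∪ b ∈ X.K (k + 1 + 1) then X.m (a ∪ b) * (φ a * φ b) else 0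
  have hcount : ∀ a ∈ X.K (k + 1), ∀ b ∈ X.K (k + 1),
      ∑ τ ∈ X.K k, (if τ ⊆ a ∩ b then F a b else 0) = F a b := fun a ha b hb => by
    by_cases hab : a ∪ b ∈ X.K (k + 1 + 1)
    · have hcard := card_union_add_card_inter a b
      rw [(mem_K.1 ha).2, (mem_K.1 hb).2, (mem_K.1 hab).2] at hcard
      have hint : a ∩ b ∈ X.K k :=
        mem_K.2 ⟨hX.mem_faces_of_subset (mem_K.1 ha).1 inter_subset_left, by omega⟩
      calc ∑ τ ∈ X.K k, (if τ ⊆ a ∩ b then F a b else 0)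
          = ∑ τ ∈ X.K k, (if τ = a ∩ b then F a b else 0) :=
            sum_congr rfl fun τ hτ => if_congr ⟨fun h => eq_of_subset_of_card_le h
              (by rw [(mem_K.1 hτ).2, (mem_K.1 hint).2]), fun h => h ▸ subset_rfl⟩ rfl rfl
        _ = F a b := by rw [sum_ite_eq', if_pos hint]
    · simp only [F, if_neg hab, ite_self, sum_const_zero]
  calc ∑ τ ∈ X.K k, (X.link τ).adjacencyForm 1 (localize φ τ)
      = ∑ τ ∈ X.K k, ∑ a ∈ X.K (k + 1), ∑ b ∈ X.K (k + 1),
          if τ ⊆ a ∩ b then F a b else 0 := by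
        refine sum_congr rfl fun τ hτ => ?_
        rw [hX.link_adjacencyForm_one (mem_K.1 hτ).2]
        simp only [sum_filter, ite_sum_zero, subset_inter_iff, ite_and, F]
    _ = ∑ a ∈ X.K (k + 1), ∑ b ∈ X.K (k + 1), F a b := by
        rw [sum_comm]
        refine sum_congr rfl fun a ha => ?_
        rw [sum_comm]
        exact sum_congr rfl fun b hb => hcount a ha b hb
    _ = X.adjacencyForm (k + 1) φ := by
        simp only [adjacencyForm, sum_filter, F]

lemma IsWSC.link_normSq_dStar_zero (hX : X.IsWSC n) (hτ : τ ∈ X.K k) (φ : Finset V → ℝ) :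
    (X.link τ).normSq 0 ((X.link τ).dStar 0 (localize φ τ)) =
      X.m τ * (X.dStar k φ τ * X.dStar k φ τ) := by
  obtain ⟨hτf, hτk⟩ := mem_K.1 hτ
  have hdStar : (X.link τ).dStar 0 (localize φ τ) ∅ = X.dStar k φ τ := by
    simp only [dStar, filter_true_of_mem fun η _ => empty_subset η, link_m, localize_apply,
      union_empty, zero_add]
    exact hX.sum_link_K hτk 1 fun σ => X.m σ / X.m τ * φ σ
  rw [normSq, inn, K_zero (hX.empty_mem_link_faces hτf), sum_singleton, hdStar, link_m,
    union_empty]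

end WSC

/-- For every `0 ≤ k ≤ n-1` and every `φ ∈ C^k(X,ℝ)`,
`‖dφ‖² = ‖d*φ‖² + ‖φ‖² + Σ_{τ ∈ X(k-1)} ⟨(M')⁺_{τ,0} (I - M⁻_{τ,0}) φ_τ, φ_τ⟩`.
(Here `φ` lives at cardinality level `k+1`, `τ` ranges over `X(k-1)`, i.e. level `k`,
and `φ_τ ∈ C⁰(X_τ,ℝ)` lives at link level `1`.) -/
theorem d_normSq_decomposition {V : Type*} [DecidableEq V] (X : WSC V) (n : ℕ)
    (hX : X.IsWSC n) (k : ℕ) (hk : k < n) (φ : Finset V → ℝ) :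
    X.normSq (k + 2) (X.d (k + 1) φ) =
      X.normSq k (X.dStar k φ) + X.normSq (k + 1) φ +
        ∑ τ ∈ X.K k,
          (X.link τ).inn 1
            ((X.link τ).Mup' 1
              (fun η => localize φ τ η - (X.link τ).Mdown 1 (localize φ τ) η))
            (localize φ τ) := by
  have hlocal : ∀ τ ∈ X.K k, (X.link τ).inn 1 ((X.link τ).Mup' 1
      (fun η => localize φ τ η - (X.link τ).Mdown 1 (localize φ τ) η)) (localize φ τ) =
        (X.link τ).adjacencyForm 1 (localize φ τ) - X.m τ * (X.dStar k φ τ * X.dStar k φ τ) :=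
    fun τ hτ => by
      rw [(hX.link hτ hk.le).inn_Mup'_sub_Mdown (by omega), hX.link_normSq_dStar_zero hτ]
  rw [sum_congr rfl hlocal, sum_sub_distrib, hX.sum_link_adjacencyForm_one,
    show k + 2 = k + 1 + 1 from rfl, hX.normSq_d hk]
  simp only [normSq, inn]
  ring
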